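/- Let $(\Delta_\ell)_{\ell \ge 0}$ be a sequence of integrable real random variables, and let $L$ be an $\mathbb{N}$-valued random variable independent of $(\Delta_\ell)$ with $p_\ell := \mathbb{P}(L \ge \ell) > 0$ for all $\ell$. Assume $\sum_{\ell \ge 0} \mathbb{E}|\Delta_\ell| < \infty$. Then the single-term-style estimator $S = \sum_{\ell=0}^{L} \Delta_\ell / p_\ell$ is integrable and satisfies $\mathbb{E}[S] = \sum_{\ell=0}^{\infty} \mathbb{E}[\Delta_\ell]$. -/

import Mathlib

open MeasureTheory ProbabilityTheory Filter

/-- Debiasing identity for the randomized multilevel estimator: if `L` is an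
`ℕ`-valued random variable independent of the integrable increments `(Δ_ℓ)`,
with `p_ℓ = ℙ(L ≥ ℓ) > 0`, and `∑ ℓ, 𝔼|Δ_ℓ| < ∞`, then
`S = ∑_{ℓ=0}^{L} Δ_ℓ / p_ℓ` is integrable with `𝔼[S] = ∑_{ℓ} 𝔼[Δ_ℓ]`. -/
theorem stmt15 {Ω : Type*} [MeasureSpace Ω] [IsProbabilityMeasure (ℙ : Measure Ω)]
    (Δ : ℕ → Ω → ℝ) (L : Ω → ℕ)
    (hΔmeas : ∀ ℓ, Measurable (Δ ℓ)) (hLmeas : Measurable L)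
    (hInt : ∀ ℓ, Integrable (Δ ℓ) ℙ)
    (hindep : IndepFun (fun ω => fun ℓ => Δ ℓ ω) L ℙ)
    (hp : ∀ ℓ : ℕ, 0 < (ℙ {ω | ℓ ≤ L ω}).toReal)
    (hsum : Summable fun ℓ => ∫ ω, |Δ ℓ ω| ∂ℙ)
    (S : Ω → ℝ)
    (hS : ∀ ω, S ω = ∑ ℓ ∈ Finset.range (L ω + 1),
      Δ ℓ ω / (ℙ {ω' | ℓ ≤ L ω'}).toReal) :
    Integrable S ℙ ∧ ∫ ω, S ω ∂ℙ = ∑' ℓ : ℕ, ∫ ω, Δ ℓ ω ∂ℙ := by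
  set A : ℕ → Set Ω := fun ℓ => {ω | ℓ ≤ L ω} with hA
  set p : ℕ → ℝ := fun ℓ => (ℙ (A ℓ)).toReal with hpdef
  have hAmeas : ∀ ℓ, MeasurableSet (A ℓ) := fun ℓ => hLmeas measurableSet_Ici
  set g : ℕ → Ω → ℝ := fun ℓ => (A ℓ).indicator (fun _ => (p ℓ)⁻¹) with hg
  set f : ℕ → Ω → ℝ := fun ℓ ω => Δ ℓ ω * g ℓ ω with hf
  have hgval : ∀ ℓ ω, g ℓ ω = if ℓ ≤ L ω then (p ℓ)⁻¹ else 0 := by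
    intro ℓ ω
    by_cases h : ℓ ≤ L ω
    · simp [hg, Set.indicator_of_mem, h, hA, Set.mem_setOf_eq]
    · simp [hg, Set.indicator_of_notMem, h, hA, Set.mem_setOf_eq]
  have hgmeas : ∀ ℓ, Measurable (g ℓ) := fun ℓ =>
    measurable_const.indicator (hAmeas ℓ)
  have hgint : ∀ ℓ, Integrable (g ℓ) ℙ := fun ℓ =>
    (integrable_const _).indicator (hAmeas ℓ)
  have hgintegral : ∀ ℓ, ∫ ω, g ℓ ω ∂ℙ = 1 := by
    intro ℓ
    rw [hg]
    rw [integral_indicator_const ((p ℓ)⁻¹) (hAmeas ℓ)]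
    simp only [smul_eq_mul, ← hpdef]
    field_simp [(hp ℓ).ne']
    exact div_self (hp ℓ).ne'
  -- key independence computation
  have hmul : ∀ (ℓ : ℕ) (φ : ℝ → ℝ), Measurable φ →
      Integrable (fun ω => φ (Δ ℓ ω)) ℙ →
      ∫ ω, φ (Δ ℓ ω) * g ℓ ω ∂ℙ = ∫ ω, φ (Δ ℓ ω) ∂ℙ := by
    intro ℓ φ hφ hφint
    have hindep' : IndepFun (fun ω => φ (Δ ℓ ω)) (g ℓ) ℙ := by
      have h := hindep.comp (φ := fun v : ℕ → ℝ => φ (v ℓ))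
        (ψ := fun n : ℕ => if ℓ ≤ n then (p ℓ)⁻¹ else 0)
        (hφ.comp (measurable_pi_apply ℓ)) measurable_from_top
      have : g ℓ = (fun n : ℕ => if ℓ ≤ n then (p ℓ)⁻¹ else 0) ∘ L := by
        funext ω; simp [hgval ℓ ω, Function.comp]
      rw [this]
      exact h
    have h := IndepFun.integral_mul_eq_mul_integral hindep' hφint.aestronglyMeasurable (hgint ℓ).aestronglyMeasurable
    calc ∫ ω, φ (Δ ℓ ω) * g ℓ ω ∂ℙ
        = integral ℙ ((fun ω => φ (Δ ℓ ω)) * g ℓ) := rfl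
      _ = (∫ ω, φ (Δ ℓ ω) ∂ℙ) * integral ℙ (g ℓ) := h
      _ = (∫ ω, φ (Δ ℓ ω) ∂ℙ) * 1 := by
            rw [show integral ℙ (g ℓ) = ∫ ω, g ℓ ω ∂ℙ from rfl, hgintegral ℓ]
      _ = ∫ ω, φ (Δ ℓ ω) ∂ℙ := mul_one _
  have hfint : ∀ ℓ, Integrable (f ℓ) ℙ := by
    intro ℓ
    have : f ℓ = (A ℓ).indicator (fun ω => Δ ℓ ω * (p ℓ)⁻¹) := by
      funext ω
      by_cases h : ω ∈ A ℓ
      · simp [hf, hg, Set.indicator_of_mem, h]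
      · simp [hf, hg, Set.indicator_of_notMem, h]
    rw [this]
    exact ((hInt ℓ).mul_const _).indicator (hAmeas ℓ)
  have hfmeas : ∀ ℓ, Measurable (f ℓ) := fun ℓ => (hΔmeas ℓ).mul (hgmeas ℓ)
  -- the integral of f ℓ
  have hfintegral : ∀ ℓ, ∫ ω, f ℓ ω ∂ℙ = ∫ ω, Δ ℓ ω ∂ℙ :=
    fun ℓ => hmul ℓ id measurable_id (hInt ℓ)
  -- norms
  have hgnonneg : ∀ ℓ ω, 0 ≤ g ℓ ω := by
    intro ℓ ω; rw [hgval]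
    split
    · exact inv_nonneg.mpr (hp ℓ).le
    · exact le_refl 0
  have hfnorm : ∀ ℓ ω, ‖f ℓ ω‖ = |Δ ℓ ω| * g ℓ ω := by
    intro ℓ ω
    rw [hf, Real.norm_eq_abs, abs_mul, abs_of_nonneg (hgnonneg ℓ ω)]
  have hfnormint : ∀ ℓ, ∫ ω, ‖f ℓ ω‖ ∂ℙ = ∫ ω, |Δ ℓ ω| ∂ℙ := by
    intro ℓ
    simp_rw [hfnorm ℓ]
    exact hmul ℓ (fun x => |x|) (measurable_id.abs) (hInt ℓ).abs
  have hnormsum : Summable fun ℓ => ∫ ω, ‖f ℓ ω‖ ∂ℙ := by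
    simpa only [hfnormint] using hsum
  -- pointwise identity S = tsum f
  have hfzero : ∀ ω ℓ, L ω < ℓ → f ℓ ω = 0 := by
    intro ω ℓ h
    rw [hf]; dsimp only
    rw [hgval ℓ ω, if_neg (by omega), mul_zero]
  have hSsum : ∀ ω, S ω = ∑ ℓ ∈ Finset.range (L ω + 1), f ℓ ω := by
    intro ω
    rw [hS]
    refine Finset.sum_congr rfl fun ℓ hℓ => ?_
    have hℓ' : ℓ ≤ L ω := by simpa [Nat.lt_succ_iff] using Finset.mem_range.mp hℓ
    rw [hf]; dsimp only
    rw [hgval ℓ ω, if_pos hℓ', div_eq_mul_inv, hpdef]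
  have hSeq : ∀ ω, S ω = ∑' ℓ, f ℓ ω := by
    intro ω
    rw [hSsum ω]
    exact (tsum_eq_sum (fun ℓ hℓ => hfzero ω ℓ (by
      simpa [Nat.lt_succ_iff, not_le] using fun h => hℓ (Finset.mem_range.mpr (Nat.lt_succ_of_le h))))).symm
  -- partial sums eventually equal S
  have hpartial : ∀ ω n, L ω + 1 ≤ n → ∑ ℓ ∈ Finset.range n, f ℓ ω = S ω := by
    intro ω n hn
    rw [hSsum ω]
    refine (Finset.sum_subset (Finset.range_subset_range.mpr hn) ?_).symm
    intro ℓ _ hℓ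
    exact hfzero ω ℓ (by simpa [Nat.lt_succ_iff, not_lt] using Finset.mem_range.not.mp hℓ |> fun h => by omega)
  have hSmeas : Measurable S := by
    refine measurable_of_tendsto_metrizable
      (f := fun n ω => ∑ ℓ ∈ Finset.range n, f ℓ ω)
      (fun n => Finset.measurable_sum _ fun ℓ _ => hfmeas ℓ) ?_
    rw [tendsto_pi_nhds]
    intro ω
    exact tendsto_atTop_of_eventually_const (i₀ := L ω + 1) (fun n hn => hpartial ω n hn)
  -- finite integral
  have hSint : Integrable S ℙ := by
    refine ⟨hSmeas.aestronglyMeasurable, ?_⟩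
    show ∫⁻ ω, ‖S ω‖₊ ∂ℙ < ⊤
    calc ∫⁻ ω, ‖S ω‖₊ ∂ℙ ≤ ∫⁻ ω, ∑' ℓ, ‖f ℓ ω‖₊ ∂ℙ := by
          refine lintegral_mono fun ω => ?_
          rw [hSsum ω]
          calc (‖∑ ℓ ∈ Finset.range (L ω + 1), f ℓ ω‖₊ : ENNReal)
              ≤ ∑ ℓ ∈ Finset.range (L ω + 1), (‖f ℓ ω‖₊ : ENNReal) := by
                rw [← ENNReal.coe_finset_sum]
                exact_mod_cast nnnorm_sum_le _ _
            _ ≤ ∑' ℓ, (‖f ℓ ω‖₊ : ENNReal) := ENNReal.sum_le_tsum _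
      _ = ∑' ℓ, ∫⁻ ω, ‖f ℓ ω‖₊ ∂ℙ :=
          lintegral_tsum fun ℓ => (hfmeas ℓ).nnnorm.coe_nnreal_ennreal.aemeasurable
      _ = ∑' ℓ, ENNReal.ofReal (∫ ω, ‖f ℓ ω‖ ∂ℙ) := by
          refine tsum_congr fun ℓ => ?_
          rw [ofReal_integral_norm_eq_lintegral_enorm (hfint ℓ)]; rfl
      _ = ENNReal.ofReal (∑' ℓ, ∫ ω, ‖f ℓ ω‖ ∂ℙ) := by
          rw [ENNReal.ofReal_tsum_of_nonneg
            (fun ℓ => integral_nonneg fun ω => norm_nonneg _) hnormsum]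
      _ < ⊤ := ENNReal.ofReal_lt_top
  refine ⟨hSint, ?_⟩
  have : S = fun ω => ∑' ℓ, f ℓ ω := funext hSeq
  rw [this, ← integral_tsum_of_summable_integral_norm hfint hnormsum]
  exact tsum_congr hfintegral
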